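/- For a weak S-structure (f, Q, ξ_i, η^i, g), the vector fields ξ_1, …, ξ_p are Killing; moreover, the characteristic distribution ker f is integrable and defines a Riemannian totally geodesic foliation, i.e., both ker f and its orthogonal complement f(TM) are totally geodesic distributions. -/

import Mathlib

/-!
An algebraic model of the calculus of smooth vector fields on a smooth manifold
`M^{2n+p}`: `F` plays the role of the ordered commutative `ℝ`-algebra `C^∞(M)` of
smooth real-valued functions, and `V` the `F`-module `𝔛(M)` of smooth vector fields,
equipped with the derivation action `D` of vector fields on functions, the Lie
bracket of vector fields, a Riemannian metric `g` (a symmetric, `F`-bilinear,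
positive-definite form) and its Levi-Civita connection `nabla` (the unique metric,
torsion-free affine connection of `g`).
-/

noncomputable section

structure RiemannCalculus (F V : Type*) [CommRing F] [PartialOrder F] [IsOrderedRing F] [Algebra ℝ F]
    [AddCommGroup V] [Module F V] where
  /-- the derivation action `X φ` of a vector field `X` on a function `φ` -/
  D : V → F → F
  D_add_left : ∀ X Y φ, D (X + Y) φ = D X φ + D Y φ
  D_smul_left : ∀ (ψ : F) (X : V) (φ : F), D (ψ • X) φ = ψ * D X φ
  D_add_right : ∀ (X : V) (φ ψ : F), D X (φ + ψ) = D X φ + D X ψ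
  D_mul_right : ∀ (X : V) (φ ψ : F), D X (φ * ψ) = φ * D X ψ + ψ * D X φ
  D_algebraMap : ∀ (X : V) (r : ℝ), D X (algebraMap ℝ F r) = 0
  /-- the Lie bracket `[X, Y]` of vector fields -/
  bracket : V → V → V
  bracket_add_left : ∀ X Y Z, bracket (X + Y) Z = bracket X Z + bracket Y Z
  bracket_antisymm : ∀ X Y, bracket X Y = -bracket Y X
  bracket_leibniz : ∀ (X : V) (φ : F) (Y : V),
    bracket X (φ • Y) = φ • bracket X Y + D X φ • Y
  bracket_jacobi : ∀ X Y Z,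
    bracket X (bracket Y Z) = bracket (bracket X Y) Z + bracket Y (bracket X Z)
  D_bracket : ∀ X Y φ, D (bracket X Y) φ = D X (D Y φ) - D Y (D X φ)
  /-- the Riemannian metric `g` -/
  g : V → V → F
  g_symm : ∀ X Y, g X Y = g Y X
  g_add_left : ∀ X Y Z, g (X + Y) Z = g X Z + g Y Z
  g_smul_left : ∀ (φ : F) (X Y : V), g (φ • X) Y = φ * g X Y
  g_nonneg : ∀ X, 0 ≤ g X X
  g_definite : ∀ X, g X X = 0 → X = 0
  /-- the Levi-Civita connection `∇` of `g` -/
  nabla : V → V → V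
  nabla_add_left : ∀ X Y Z, nabla (X + Y) Z = nabla X Z + nabla Y Z
  nabla_smul_left : ∀ (φ : F) (X Y : V), nabla (φ • X) Y = φ • nabla X Y
  nabla_add_right : ∀ X Y Z, nabla X (Y + Z) = nabla X Y + nabla X Z
  nabla_leibniz : ∀ (X : V) (φ : F) (Y : V),
    nabla X (φ • Y) = φ • nabla X Y + D X φ • Y
  nabla_metric : ∀ X Y Z, D X (g Y Z) = g (nabla X Y) Z + g Y (nabla X Z)
  nabla_torsion_free : ∀ X Y, nabla X Y - nabla Y X = bracket X Y

/-- A metric weak `f`-structure `(f, Q, ξ_i, η^i, g)` on a smooth manifold `M^{2n+p}`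
(Rovenski–Wolak): `f` is a `(1,1)`-tensor field of rank `2n`, `Q` a nonsingular
`(1,1)`-tensor field, `ξ_1, …, ξ_p` vector fields spanning `ker f`, and `η^1, …, η^p`
the dual `1`-forms, satisfying `f³ + f∘Q = 0`, `Q ξᵢ = ξᵢ`,
`f² = -Q + Σᵢ ηⁱ ⊗ ξᵢ`, `ηⁱ(ξⱼ) = δⁱⱼ`, together with a compatible Riemannian
metric: `g(fX, fY) = g(X, QY) - Σᵢ ηⁱ(X) ηⁱ(QY)`. -/
structure MetricWeakFStructure (p : ℕ) (F V : Type*) [CommRing F] [PartialOrder F] [IsOrderedRing F] [Algebra ℝ F]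
    [AddCommGroup V] [Module F V] extends RiemannCalculus F V where
  f : V →ₗ[F] V
  Q : V →ₗ[F] V
  ξ : Fin p → V
  η : Fin p → V →ₗ[F] F
  Q_nonsingular : Function.Bijective Q
  f_cubed : ∀ X, f (f (f X)) + f (Q X) = 0
  Q_xi : ∀ i, Q (ξ i) = ξ i
  f_squared : ∀ X, f (f X) = -Q X + ∑ i, η i X • ξ i
  eta_xi : ∀ i j, η i (ξ j) = if i = j then (1 : F) else 0
  /-- the `ηⁱ` are the coframe dual to the `ξᵢ` w.r.t. the splitting
  `TM = f(TM) ⊕ ker f` (equivalently, `ηⁱ ∘ f = 0`). -/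
  eta_Q : ∀ i X, η i (Q X) = η i X
  /-- the `ξᵢ` span `ker f` -/
  ker_f_spanned : ∀ X, f X = 0 → X ∈ Submodule.span F (Set.range ξ)
  compatible : ∀ X Y, g (f X) (f Y) = g X (Q Y) - ∑ i, η i X * η i (Q Y)

namespace MetricWeakFStructure

variable {p : ℕ} {F V : Type*} [CommRing F] [PartialOrder F] [IsOrderedRing F] [Algebra ℝ F]
  [AddCommGroup V] [Module F V] (S : MetricWeakFStructure p F V)

/-- the fundamental 2-form `Φ(X,Y) = g(X, fY)` -/
def Phi (X Y : V) : F := S.g X (S.f Y)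

/-- `dηⁱ(X,Y) = (1/2){X(ηⁱ(Y)) - Y(ηⁱ(X)) - ηⁱ([X,Y])}` -/
def dEta (i : Fin p) (X Y : V) : F :=
  algebraMap ℝ F (1 / 2) *
    (S.D X (S.η i Y) - S.D Y (S.η i X) - S.η i (S.bracket X Y))

/-- `dΦ(X,Y,Z) = (1/3){XΦ(Y,Z) + YΦ(Z,X) + ZΦ(X,Y) - Φ([X,Y],Z) - Φ([Z,X],Y) - Φ([Y,Z],X)}` -/
def dPhi (X Y Z : V) : F :=
  algebraMap ℝ F (1 / 3) *
    (S.D X (S.Phi Y Z) + S.D Y (S.Phi Z X) + S.D Z (S.Phi X Y)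
      - S.Phi (S.bracket X Y) Z - S.Phi (S.bracket Z X) Y - S.Phi (S.bracket Y Z) X)

/-- the Nijenhuis torsion `[f,f](X,Y) = f²[X,Y] + [fX,fY] - f[fX,Y] - f[X,fY]` -/
def nijenhuis (X Y : V) : V :=
  S.f (S.f (S.bracket X Y)) + S.bracket (S.f X) (S.f Y)
    - S.f (S.bracket (S.f X) Y) - S.f (S.bracket X (S.f Y))

/-- `N⁽¹⁾ = [f,f] + 2 Σᵢ dηⁱ ⊗ ξᵢ` -/
def N1 (X Y : V) : V := S.nijenhuis X Y + ∑ i, (2 * S.dEta i X Y) • S.ξ i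

/-- the Lie derivative of `f`: `(£_Z f)X = [Z, fX] - f[Z,X]` -/
def lieD_f (Z X : V) : V := S.bracket Z (S.f X) - S.f (S.bracket Z X)

/-- the Lie derivative of `ηʲ`: `(£_Z ηʲ)X = Z(ηʲ(X)) - ηʲ([Z,X])` -/
def lieD_eta (j : Fin p) (Z X : V) : F := S.D Z (S.η j X) - S.η j (S.bracket Z X)

/-- the Lie derivative of `g`: `(£_Z g)(X,Y) = Z(g(X,Y)) - g([Z,X],Y) - g(X,[Z,Y])` -/
def lieD_g (Z X Y : V) : F :=
  S.D Z (S.g X Y) - S.g (S.bracket Z X) Y - S.g X (S.bracket Z Y)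

/-- `N⁽²⁾ᵢ(X,Y) = (£_{fX} ηⁱ)Y - (£_{fY} ηⁱ)X` -/
def N2 (i : Fin p) (X Y : V) : F := S.lieD_eta i (S.f X) Y - S.lieD_eta i (S.f Y) X

/-- `N⁽³⁾ᵢ = £_{ξᵢ} f` -/
def N3 (i : Fin p) (X : V) : V := S.lieD_f (S.ξ i) X

/-- `N⁽⁴⁾ᵢⱼ = £_{ξᵢ} ηʲ` -/
def N4 (i j : Fin p) (X : V) : F := S.lieD_eta j (S.ξ i) X

/-- `Q̃ = Q - id` -/
def Qt (X : V) : V := S.Q X - X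

/-- `X^⊤ = X - Σᵢ ηⁱ(X) ξᵢ`, the `f(TM)`-component of `X` -/
def top (X : V) : V := X - ∑ i, S.η i X • S.ξ i

/-- `N⁽⁵⁾(X,Y,Z) = (fZ)(g(X^⊤,Q̃Y)) - (fY)(g(X^⊤,Q̃Z)) + g([X,fZ]^⊤,Q̃Y)
  - g([X,fY]^⊤,Q̃Z) + g([Y,fZ]^⊤ - [Z,fY]^⊤ - f[Y,Z], Q̃X)` -/
def N5 (X Y Z : V) : F :=
  S.D (S.f Z) (S.g (S.top X) (S.Qt Y)) - S.D (S.f Y) (S.g (S.top X) (S.Qt Z))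
    + S.g (S.top (S.bracket X (S.f Z))) (S.Qt Y)
    - S.g (S.top (S.bracket X (S.f Y))) (S.Qt Z)
    + S.g (S.top (S.bracket Y (S.f Z)) - S.top (S.bracket Z (S.f Y))
        - S.f (S.bracket Y Z)) (S.Qt X)

/-- the covariant derivative of `f`: `(∇_X f)Y = ∇_X(fY) - f(∇_X Y)` -/
def nablaF (X Y : V) : V := S.nabla X (S.f Y) - S.f (S.nabla X Y)

/-- `hᵢ = (1/2) £_{ξᵢ} f` -/
def hT (i : Fin p) (X : V) : V := algebraMap ℝ F (1 / 2) • S.N3 i X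

/-- a vector field `Z` is Killing if `£_Z g = 0` -/
def IsKilling (Z : V) : Prop := ∀ X Y : V, S.lieD_g Z X Y = 0

/-- the structure is normal if `N⁽¹⁾ = 0` -/
def Normal : Prop := ∀ X Y : V, S.N1 X Y = 0

/-- a weak K-structure: normal with `dΦ = 0` -/
def WeakK : Prop := S.Normal ∧ ∀ X Y Z : V, S.dPhi X Y Z = 0

/-- a weak almost S-structure: `dηⁱ = Φ` for all `i` -/
def WeakAlmostS : Prop := ∀ (i : Fin p) (X Y : V), S.dEta i X Y = S.Phi X Y

/-- a weak S-structure: a weak K-structure with `dηⁱ = Φ` for all `i` -/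
def WeakS : Prop := S.WeakK ∧ S.WeakAlmostS

/-- a weak almost C-structure: `dΦ = 0` and `dηⁱ = 0` for all `i` -/
def WeakAlmostC : Prop :=
  (∀ X Y Z : V, S.dPhi X Y Z = 0) ∧ ∀ (i : Fin p) (X Y : V), S.dEta i X Y = 0

/-- a weak C-structure: a weak K-structure with `dηⁱ = 0` for all `i` -/
def WeakC : Prop := S.WeakK ∧ ∀ (i : Fin p) (X Y : V), S.dEta i X Y = 0

section AuxLemmas

lemma D_zero' (X : V) : S.D X 0 = 0 := by
  have h := S.D_add_right X 0 0
  rw [add_zero] at h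
  exact left_eq_add.mp h

lemma D_one' (X : V) : S.D X (1 : F) = 0 := by
  simpa using S.D_algebraMap X 1

lemma D_neg' (X : V) (φ : F) : S.D X (-φ) = -S.D X φ := by
  have h := S.D_add_right X φ (-φ)
  rw [add_neg_cancel, S.D_zero'] at h
  exact (neg_eq_of_add_eq_zero_right h.symm).symm

lemma D_sub' (X : V) (φ ψ : F) : S.D X (φ - ψ) = S.D X φ - S.D X ψ := by
  rw [sub_eq_add_neg, S.D_add_right, S.D_neg', sub_eq_add_neg]

lemma D_ite' (X : V) {c : Prop} [Decidable c] :
    S.D X (if c then (1 : F) else 0) = 0 := by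
  split
  · exact S.D_one' X
  · exact S.D_zero' X

lemma g_add_right' (X Y Z : V) : S.g X (Y + Z) = S.g X Y + S.g X Z := by
  rw [S.g_symm, S.g_add_left, S.g_symm Y X, S.g_symm Z X]

lemma g_smul_right' (φ : F) (X Y : V) : S.g X (φ • Y) = φ * S.g X Y := by
  rw [S.g_symm, S.g_smul_left, S.g_symm]

lemma g_zero_right' (X : V) : S.g X 0 = 0 := by
  have h := S.g_add_right' X 0 0
  rw [add_zero] at h
  exact left_eq_add.mp h

lemma g_zero_left' (X : V) : S.g 0 X = 0 := by
  rw [S.g_symm]; exact S.g_zero_right' X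

lemma g_neg_right' (X Y : V) : S.g X (-Y) = -S.g X Y := by
  rw [← neg_one_smul F Y, S.g_smul_right']; ring

lemma g_neg_left' (X Y : V) : S.g (-X) Y = -S.g X Y := by
  rw [S.g_symm, S.g_neg_right', S.g_symm]

lemma g_sub_right' (X Y Z : V) : S.g X (Y - Z) = S.g X Y - S.g X Z := by
  rw [sub_eq_add_neg, S.g_add_right', S.g_neg_right', sub_eq_add_neg]

lemma g_sub_left' (X Y Z : V) : S.g (X - Y) Z = S.g X Z - S.g Y Z := by
  rw [sub_eq_add_neg, S.g_add_left, S.g_neg_left', sub_eq_add_neg]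

lemma bracket_zero_left' (Y : V) : S.bracket 0 Y = 0 := by
  have h := S.bracket_add_left 0 0 Y
  rw [add_zero] at h
  exact left_eq_add.mp h

lemma bracket_zero_right' (X : V) : S.bracket X 0 = 0 := by
  rw [S.bracket_antisymm, S.bracket_zero_left', neg_zero]

lemma bracket_add_right' (X Y Z : V) :
    S.bracket X (Y + Z) = S.bracket X Y + S.bracket X Z := by
  rw [S.bracket_antisymm X (Y + Z), S.bracket_add_left,
    S.bracket_antisymm Y X, S.bracket_antisymm Z X]
  abel

lemma bracket_smul_left' (φ : F) (X Y : V) :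
    S.bracket (φ • X) Y = φ • S.bracket X Y - S.D Y φ • X := by
  rw [S.bracket_antisymm (φ • X) Y, S.bracket_leibniz, S.bracket_antisymm Y X]
  rw [smul_neg]
  abel

lemma nabla_zero_left' (Y : V) : S.nabla 0 Y = 0 := by
  have h := S.nabla_add_left 0 0 Y
  rw [add_zero] at h
  exact left_eq_add.mp h

lemma nabla_zero_right' (X : V) : S.nabla X 0 = 0 := by
  have h := S.nabla_add_right X 0 0
  rw [add_zero] at h
  exact left_eq_add.mp h

lemma half_cancel {t : F} (h : algebraMap ℝ F (1 / 2) * t = 0) : t = 0 := by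
  have h2 := congrArg (fun s => algebraMap ℝ F 2 * s) h
  simp only [mul_zero] at h2
  rwa [← mul_assoc, ← map_mul, show (2 : ℝ) * (1 / 2) = 1 by norm_num,
    map_one, one_mul] at h2

lemma f_xi (i : Fin p) : S.f (S.ξ i) = 0 := by
  have h2 : S.f (S.f (S.ξ i)) = 0 := by
    rw [S.f_squared, S.Q_xi]
    simp [S.eta_xi, ite_smul]
  have h3 := S.f_cubed (S.ξ i)
  rw [h2, map_zero, S.Q_xi, zero_add] at h3
  exact h3

lemma g_xi (X : V) (j : Fin p) : S.g X (S.ξ j) = S.η j X := by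
  have h := S.compatible X (S.ξ j)
  rw [S.f_xi, S.g_zero_right', S.Q_xi] at h
  have hs : (∑ i, S.η i X * S.η i (S.ξ j)) = S.η j X := by
    simp [S.eta_xi]
  rw [hs] at h
  exact sub_eq_zero.mp h.symm

lemma ker_decomp (X : V) (h : S.f X = 0) : X = ∑ j, S.η j X • S.ξ j := by
  have hmem := S.ker_f_spanned X h
  refine Submodule.span_induction (p := fun v _ => v = ∑ j, S.η j v • S.ξ j)
    ?_ ?_ ?_ ?_ hmem
  · rintro x ⟨k, rfl⟩
    simp [S.eta_xi, ite_smul]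
  · simp
  · intro x y _ _ hx hy
    simp only [map_add, add_smul, Finset.sum_add_distrib]
    rw [← hx, ← hy]
  · intro a x _ hx
    simp only [map_smul, smul_eq_mul, mul_smul, ← Finset.smul_sum]
    rw [← hx]

lemma phi_skew (hAS : S.WeakAlmostS) (i : Fin p) (X Y : V) :
    S.g X (S.f Y) = -(S.g Y (S.f X)) := by
  show S.Phi X Y = -(S.Phi Y X)
  rw [← hAS i X Y, ← hAS i Y X]
  simp only [dEta]
  rw [S.bracket_antisymm Y X, map_neg]
  ring

lemma eta_f (hAS : S.WeakAlmostS) (j : Fin p) (X : V) : S.η j (S.f X) = 0 := by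
  have h := S.phi_skew hAS j X (S.ξ j)
  rw [S.f_xi, S.g_zero_right'] at h
  have h2 : S.g (S.ξ j) (S.f X) = 0 := neg_eq_zero.mp h.symm
  rw [S.g_symm, S.g_xi] at h2
  exact h2

lemma phi_xi_left (hAS : S.WeakAlmostS) (i : Fin p) (X : V) :
    S.g (S.ξ i) (S.f X) = 0 := by
  rw [S.g_symm, S.g_xi]
  exact S.eta_f hAS i X

lemma eta_bracket_xi (hAS : S.WeakAlmostS) (i j : Fin p) (X : V) :
    S.η j (S.bracket (S.ξ i) X) = S.D (S.ξ i) (S.η j X) := by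
  have h := hAS j (S.ξ i) X
  have hphi : S.Phi (S.ξ i) X = 0 := S.phi_xi_left hAS i X
  rw [hphi] at h
  simp only [dEta] at h
  have h2 := half_cancel h
  have h3 : S.D X (S.η j (S.ξ i)) = 0 := by
    rw [S.eta_xi]; exact S.D_ite' X
  rw [h3, sub_zero] at h2
  exact (sub_eq_zero.mp h2).symm

lemma bracket_xi_f (hAS : S.WeakAlmostS) (hN : S.Normal) (i : Fin p) (X : V) :
    S.bracket (S.ξ i) (S.f X) = S.f (S.bracket (S.ξ i) X) := by
  have hn := hN (S.ξ i) X
  simp only [N1, nijenhuis] at hn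
  rw [S.f_xi, S.bracket_zero_left', S.bracket_zero_left', map_zero] at hn
  have hz : ∀ j, S.dEta j (S.ξ i) X = 0 := fun j => by
    rw [hAS j]; exact S.phi_xi_left hAS i X
  simp only [hz, mul_zero, zero_smul, Finset.sum_const_zero, add_zero,
    sub_zero] at hn
  -- hn : f (f [ξ,X]) + 0 - f [ξ, f X] = 0 (modulo simp normal form)
  have hfw : S.f (S.f (S.bracket (S.ξ i) X) - S.bracket (S.ξ i) (S.f X)) = 0 := by
    rw [map_sub]
    exact hn
  have hd := S.ker_decomp _ hfw
  have hc : ∀ k, S.η k (S.f (S.bracket (S.ξ i) X) - S.bracket (S.ξ i) (S.f X)) = 0 := by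
    intro k
    rw [map_sub, S.eta_f hAS k, S.eta_bracket_xi hAS i k, S.eta_f hAS k, S.D_zero']
    ring
  simp only [hc, zero_smul, Finset.sum_const_zero] at hd
  exact (sub_eq_zero.mp hd).symm

lemma lieDg_nabla (Z X Y : V) :
    S.lieD_g Z X Y = S.g (S.nabla X Z) Y + S.g X (S.nabla Y Z) := by
  simp only [lieD_g]
  rw [S.nabla_metric Z X Y, ← S.nabla_torsion_free Z X, ← S.nabla_torsion_free Z Y,
    S.g_sub_left', S.g_sub_right']
  ring

lemma lieDg_add (Z X A B : V) :
    S.lieD_g Z X (A + B) = S.lieD_g Z X A + S.lieD_g Z X B := by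
  simp only [lieD_g]
  rw [S.g_add_right', S.D_add_right, S.bracket_add_right', S.g_add_right',
    S.g_add_right']
  ring

lemma lieDg_smul (Z X : V) (φ : F) (Y : V) :
    S.lieD_g Z X (φ • Y) = φ * S.lieD_g Z X Y := by
  simp only [lieD_g]
  rw [S.g_smul_right', S.D_mul_right, S.g_smul_right', S.bracket_leibniz,
    S.g_add_right', S.g_smul_right', S.g_smul_right']
  ring

lemma lieDg_zero (Z X : V) : S.lieD_g Z X 0 = 0 := by
  simp only [lieD_g]
  rw [S.g_zero_right', S.D_zero', S.bracket_zero_right', S.g_zero_right',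
    S.g_zero_right']
  ring

lemma lieDg_xi_xi (hAS : S.WeakAlmostS) (hN : S.Normal) (i j : Fin p) (X : V) :
    S.lieD_g (S.ξ i) X (S.ξ j) = 0 := by
  have hbx : S.bracket (S.ξ i) (S.ξ j) = 0 := by
    have h1 : S.f (S.bracket (S.ξ i) (S.ξ j)) = 0 := by
      rw [← S.bracket_xi_f hAS hN i (S.ξ j), S.f_xi, S.bracket_zero_right']
    have hd := S.ker_decomp _ h1
    have hc : ∀ k, S.η k (S.bracket (S.ξ i) (S.ξ j)) = 0 := fun k => by
      rw [S.eta_bracket_xi hAS i k, S.eta_xi]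
      exact S.D_ite' _
    rw [hd]
    simp [hc]
  simp only [lieD_g]
  rw [hbx, S.g_zero_right', S.g_xi, S.g_xi, S.eta_bracket_xi hAS i j X]
  ring

lemma key_calc (hAS : S.WeakAlmostS) (i : Fin p) (X W : V) :
    S.D (S.ξ i) (S.D X (S.η i W) - S.D W (S.η i X) - S.η i (S.bracket X W))
      - (S.D (S.bracket (S.ξ i) X) (S.η i W) - S.D W (S.η i (S.bracket (S.ξ i) X))
          - S.η i (S.bracket (S.bracket (S.ξ i) X) W))
      - (S.D X (S.η i (S.bracket (S.ξ i) W)) - S.D (S.bracket (S.ξ i) W) (S.η i X)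
          - S.η i (S.bracket X (S.bracket (S.ξ i) W))) = 0 := by
  rw [S.D_sub', S.D_sub']
  rw [S.D_bracket (S.ξ i) X (S.η i W), S.D_bracket (S.ξ i) W (S.η i X)]
  rw [S.eta_bracket_xi hAS i i X, S.eta_bracket_xi hAS i i W]
  have hjac : S.η i (S.bracket (S.bracket (S.ξ i) X) W)
      + S.η i (S.bracket X (S.bracket (S.ξ i) W))
      = S.D (S.ξ i) (S.η i (S.bracket X W)) := by
    rw [← map_add, ← S.bracket_jacobi, S.eta_bracket_xi hAS i i]
  linear_combination hjac

lemma lieDg_fW (hAS : S.WeakAlmostS) (hN : S.Normal) (i : Fin p) (X W : V) :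
    S.lieD_g (S.ξ i) X (S.f W) = 0 := by
  have hΦ : ∀ A B : V, S.g A (S.f B) = algebraMap ℝ F (1 / 2) *
      (S.D A (S.η i B) - S.D B (S.η i A) - S.η i (S.bracket A B)) := by
    intro A B
    rw [show S.g A (S.f B) = S.Phi A B from rfl, ← hAS i A B]
    rfl
  simp only [lieD_g]
  rw [S.bracket_xi_f hAS hN i W]
  rw [hΦ X W, hΦ (S.bracket (S.ξ i) X) W, hΦ X (S.bracket (S.ξ i) W)]
  rw [S.D_mul_right, S.D_algebraMap, mul_zero, add_zero]
  linear_combination (algebraMap ℝ F (1 / 2)) * S.key_calc hAS i X W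

theorem xi_killing (hAS : S.WeakAlmostS) (hN : S.Normal) (i : Fin p) :
    S.IsKilling (S.ξ i) := by
  intro X Y
  obtain ⟨Z, hZ⟩ := S.Q_nonsingular.2 Y
  have hη : ∀ j, S.η j Z = S.η j Y := fun j => by
    rw [← hZ]; exact (S.eta_Q j Z).symm
  have hdecomp : Y = S.f (-(S.f Z)) + ∑ j, S.η j Y • S.ξ j := by
    rw [map_neg, S.f_squared Z]
    simp only [hη]
    rw [hZ]
    abel
  conv_lhs => rw [hdecomp]
  rw [S.lieDg_add, S.lieDg_fW hAS hN i X (-(S.f Z)), zero_add]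
  refine Finset.sum_induction _ (fun v => S.lieD_g (S.ξ i) X v = 0) ?_ ?_ ?_
  · intro a b ha hb
    rw [S.lieDg_add, ha, hb, add_zero]
  · exact S.lieDg_zero _ _
  · intro j _
    rw [S.lieDg_smul, S.lieDg_xi_xi hAS hN i j X, mul_zero]

end AuxLemmas

end MetricWeakFStructure

open MetricWeakFStructure

/-- For a weak S-structure, the vector fields `ξ₁, …, ξ_p` are
Killing; moreover the characteristic distribution `ker f` is integrable and defines
a Riemannian totally geodesic foliation: both `ker f` and its orthogonal complement
`f(TM)` are totally geodesic distributions. -/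
theorem statement_14 {p : ℕ} {F V : Type*} [CommRing F] [PartialOrder F] [IsOrderedRing F] [Algebra ℝ F]
    [AddCommGroup V] [Module F V] (S : MetricWeakFStructure p F V)
    (hS : S.WeakS) :
    (∀ i : Fin p, S.IsKilling (S.ξ i)) ∧
    (∀ X Y : V, S.f X = 0 → S.f Y = 0 → S.f (S.bracket X Y) = 0) ∧
    (∀ X Y : V, S.f X = 0 → S.f Y = 0 → S.f (S.nabla X Y + S.nabla Y X) = 0) ∧
    (∀ X Y : V, (∀ i, S.g X (S.ξ i) = 0) → (∀ i, S.g Y (S.ξ i) = 0) →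
      ∀ i : Fin p, S.g (S.nabla X Y + S.nabla Y X) (S.ξ i) = 0) := by
  obtain ⟨⟨hN, _⟩, hAS⟩ := hS
  have hkill : ∀ i : Fin p, S.IsKilling (S.ξ i) := fun i => S.xi_killing hAS hN i
  refine ⟨hkill, ?_, ?_, ?_⟩
  · -- integrability of ker f
    intro X Y hX hY
    have hmem := S.ker_f_spanned X hX
    refine (Submodule.span_induction
      (p := fun v _ => S.f v = 0 ∧ S.f (S.bracket v Y) = 0) ?_ ?_ ?_ ?_ hmem).2
    · rintro x ⟨j, rfl⟩
      refine ⟨S.f_xi j, ?_⟩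
      rw [← S.bracket_xi_f hAS hN j Y, hY, S.bracket_zero_right']
    · exact ⟨map_zero _, by rw [S.bracket_zero_left', map_zero]⟩
    · rintro a b _ _ ⟨ha1, ha2⟩ ⟨hb1, hb2⟩
      exact ⟨by rw [map_add, ha1, hb1, add_zero],
        by rw [S.bracket_add_left, map_add, ha2, hb2, add_zero]⟩
    · rintro c x _ ⟨h1, h2⟩
      refine ⟨by rw [map_smul, h1, smul_zero], ?_⟩
      rw [S.bracket_smul_left', map_sub, map_smul, map_smul, h1, h2,
        smul_zero, smul_zero, sub_zero]
  · -- ker f totally geodesic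
    intro X Y hX hY
    have core : ∀ j k : Fin p,
        S.f (S.nabla (S.ξ j) (S.ξ k) + S.nabla (S.ξ k) (S.ξ j)) = 0 := by
      intro j k
      have hg : ∀ Z, S.g (S.nabla (S.ξ j) (S.ξ k) + S.nabla (S.ξ k) (S.ξ j))
          (S.f Z) = 0 := by
        intro Z
        have hk1 := hkill k (S.ξ j) (S.f Z)
        rw [S.lieDg_nabla] at hk1
        have hk2 := hkill j (S.ξ k) (S.f Z)
        rw [S.lieDg_nabla] at hk2
        have hm := S.nabla_metric (S.f Z) (S.ξ j) (S.ξ k)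
        have hconst : S.D (S.f Z) (S.g (S.ξ j) (S.ξ k)) = 0 := by
          rw [S.g_xi, S.eta_xi]; exact S.D_ite' _
        rw [S.g_symm (S.ξ k) (S.nabla (S.f Z) (S.ξ j))] at hk2
        rw [S.g_add_left]
        linear_combination hk1 + hk2 + hm - hconst
      have h3 : ∀ Z, S.g Z
          (S.f (S.nabla (S.ξ j) (S.ξ k) + S.nabla (S.ξ k) (S.ξ j))) = 0 := by
        intro Z
        have hs := S.phi_skew hAS j
          (S.nabla (S.ξ j) (S.ξ k) + S.nabla (S.ξ k) (S.ξ j)) Z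
        rw [hg Z] at hs
        exact neg_eq_zero.mp hs.symm
      exact S.g_definite _ (h3 _)
    have stageA : ∀ (j : Fin p) (Y' : V), S.f Y' = 0 →
        S.f (S.nabla (S.ξ j) Y' + S.nabla Y' (S.ξ j)) = 0 := by
      intro j Y' hY'
      have hmem := S.ker_f_spanned Y' hY'
      refine (Submodule.span_induction
        (p := fun v _ => S.f v = 0 ∧
          S.f (S.nabla (S.ξ j) v + S.nabla v (S.ξ j)) = 0) ?_ ?_ ?_ ?_ hmem).2
      · rintro x ⟨k, rfl⟩
        exact ⟨S.f_xi k, core j k⟩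
      · exact ⟨map_zero _,
          by rw [S.nabla_zero_right', S.nabla_zero_left', add_zero, map_zero]⟩
      · rintro a b _ _ ⟨ha1, ha2⟩ ⟨hb1, hb2⟩
        refine ⟨by rw [map_add, ha1, hb1, add_zero], ?_⟩
        rw [S.nabla_add_right, S.nabla_add_left]
        have hre : S.nabla (S.ξ j) a + S.nabla (S.ξ j) b
              + (S.nabla a (S.ξ j) + S.nabla b (S.ξ j))
            = (S.nabla (S.ξ j) a + S.nabla a (S.ξ j))
              + (S.nabla (S.ξ j) b + S.nabla b (S.ξ j)) := by abel
        rw [hre, map_add, ha2, hb2, add_zero]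
      · rintro c x _ ⟨h1, h2⟩
        refine ⟨by rw [map_smul, h1, smul_zero], ?_⟩
        rw [S.nabla_leibniz, S.nabla_smul_left]
        have hre : c • S.nabla (S.ξ j) x + S.D (S.ξ j) c • x
              + c • S.nabla x (S.ξ j)
            = c • (S.nabla (S.ξ j) x + S.nabla x (S.ξ j))
              + S.D (S.ξ j) c • x := by
          rw [smul_add]; abel
        rw [hre, map_add, map_smul, h2, smul_zero, map_smul, h1, smul_zero,
          add_zero]
    have hmem := S.ker_f_spanned X hX
    refine (Submodule.span_induction
      (p := fun v _ => S.f v = 0 ∧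
        S.f (S.nabla v Y + S.nabla Y v) = 0) ?_ ?_ ?_ ?_ hmem).2
    · rintro x ⟨j, rfl⟩
      exact ⟨S.f_xi j, stageA j Y hY⟩
    · exact ⟨map_zero _,
        by rw [S.nabla_zero_left', S.nabla_zero_right', add_zero, map_zero]⟩
    · rintro a b _ _ ⟨ha1, ha2⟩ ⟨hb1, hb2⟩
      refine ⟨by rw [map_add, ha1, hb1, add_zero], ?_⟩
      rw [S.nabla_add_left, S.nabla_add_right]
      have hre : S.nabla a Y + S.nabla b Y + (S.nabla Y a + S.nabla Y b)
          = (S.nabla a Y + S.nabla Y a) + (S.nabla b Y + S.nabla Y b) := by abel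
      rw [hre, map_add, ha2, hb2, add_zero]
    · rintro c x _ ⟨h1, h2⟩
      refine ⟨by rw [map_smul, h1, smul_zero], ?_⟩
      rw [S.nabla_smul_left, S.nabla_leibniz]
      have hre : c • S.nabla x Y + (c • S.nabla Y x + S.D Y c • x)
          = c • (S.nabla x Y + S.nabla Y x) + S.D Y c • x := by
        rw [smul_add]; abel
      rw [hre, map_add, map_smul, h2, smul_zero, map_smul, h1, smul_zero,
        add_zero]
  · -- f(TM) totally geodesic
    intro X Y hX hY i
    have hk := hkill i X Y
    rw [S.lieDg_nabla] at hk
    have h1 := S.nabla_metric X Y (S.ξ i)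
    rw [hY i, S.D_zero'] at h1
    have h2 := S.nabla_metric Y X (S.ξ i)
    rw [hX i, S.D_zero'] at h2
    rw [S.g_add_left]
    have hs : S.g Y (S.nabla X (S.ξ i)) = S.g (S.nabla X (S.ξ i)) Y :=
      S.g_symm _ _
    linear_combination -h1 - h2 - hk - hs
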